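/- arXiv:2404.09224 — 2 statements merged into one kernel-verified Lean document; each statement's English description precedes it below -/
import Mathlib

section
/- Let A be a semiprime unital ring with essential socle and R ⊆ A a right ideal. If there is M ≥ 0 such that len(pA) ≤ M for every idempotent p ∈ soc(A) ∩ R, then len(R) ≤ M (as a right A-module). In particular, R = pA for an idempotent p ∈ soc(A) of maximal length among idempotents in soc(A) ∩ R. -/
open MulOpposite Submodule

/-- The length of a module: the supremum of lengths of chains of submodules. -/
noncomputable def mlen (R M : Type*) [Ring R] [AddCommGroup M] [Module R M] : ℕ∞ :=
  WithBot.unbotD 0 (Order.krullDim (Submodule R M))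

/-- A ring is semiprime if it has no nonzero nilpotent (two-sided) ideals;
equivalently, `a A a = 0` implies `a = 0`. -/
def IsSemiprimeRing (A : Type*) [Ring A] : Prop :=
  ∀ a : A, (∀ x : A, a * x * a = 0) → a = 0

/-- The (left) socle of a ring: the sum of all minimal left ideals. -/
noncomputable def socle (A : Type*) [Ring A] : Submodule A A :=
  sSup {m : Submodule A A | IsAtom m}

/-- An element is Fredholm if its image in `A/soc(A)` is invertible. -/
def IsFredholmElem {A : Type*} [Ring A] (a : A) : Prop :=
  ∃ b : A, a * b - 1 ∈ socle A ∧ b * a - 1 ∈ socle A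

/-- A left ideal is Fredholm if it contains a Fredholm element. -/
def IsFredholmLeftIdeal {A : Type*} [Ring A] (L : Submodule A A) : Prop :=
  ∃ a ∈ L, IsFredholmElem a

/-- The right annihilator of a set, as a right ideal (`Aᵐᵒᵖ`-submodule of `A`). -/
def rAnn {A : Type*} [Ring A] (S : Set A) : Submodule Aᵐᵒᵖ A where
  carrier := {a | ∀ s ∈ S, s * a = 0}
  add_mem' := by intro x y hx hy s hs; rw [Set.mem_setOf_eq] at *; rw [mul_add, hx s hs, hy s hs, add_zero]
  zero_mem' := by intro s _; exact mul_zero s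
  smul_mem' := by
    intro c x hx s hs
    show s * (c • x) = 0
    rw [MulOpposite.smul_eq_mul_unop, ← mul_assoc, hx s hs, zero_mul]

/-- The left annihilator of a set, as a left ideal. -/
def lAnn {A : Type*} [Ring A] (S : Set A) : Submodule A A where
  carrier := {a | ∀ s ∈ S, a * s = 0}
  add_mem' := by intro x y hx hy s hs; rw [Set.mem_setOf_eq] at *; rw [add_mul, hx s hs, hy s hs, add_zero]
  zero_mem' := by intro s _; exact zero_mul s
  smul_mem' := by
    intro c x hx s hs
    show c * x * s = 0
    rw [mul_assoc, hx s hs, mul_zero]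

/-- A semiprime ring has essential socle if every nonzero two-sided ideal
meets the socle nontrivially. -/
def HasEssentialSocle (A : Type*) [Ring A] : Prop :=
  ∀ I : TwoSidedIdeal A, I ≠ ⊥ → ∃ x, x ∈ I ∧ x ∈ socle A ∧ x ≠ 0

/-! Among the idempotents of `soc(A) ∩ R`, whose lengths are bounded by `M`, choose `p` of
maximal length. If `pA ≠ R`, there is `0 ≠ z ∈ R` with `pz = 0`. Since `A` is semiprime with
essential socle, the left annihilator of `soc(A)` vanishes, so `zc ≠ 0` for some `c ∈ soc(A)`;
Brauer's lemma applied to a minimal left ideal inside `A·zc` yields a nonzero idempotent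
`q ∈ zA ∩ soc(A)`. Then `p + q - qp` is an idempotent of `soc(A) ∩ R` generating a right ideal
strictly larger than `pA`, hence of larger length, contradicting maximality. -/

section Length

variable {R M : Type*} [Ring R] [AddCommGroup M] [Module R M]

lemma mlen_eq_length : mlen R M = Module.length R M := by
  rw [mlen, ← Module.coe_length, WithBot.unbotD_coe]

lemma mlen_lt_mlen_of_lt {N N' : Submodule R M} (h : N < N') (hN' : mlen R N' ≠ ⊤) :
    mlen R N < mlen R N' := by
  simp only [mlen_eq_length, Module.length_submodule] at hN' ⊢
  exact Order.height_strictMono h ((Order.height_mono h.le).trans_lt hN'.lt_top)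

end Length

section Atoms

variable {R M N : Type*} [Ring R] [AddCommGroup M] [Module R M] [AddCommGroup N] [Module R N]

theorem Submodule.map_sSup_atoms_le (f : M →ₗ[R] N) :
    (sSup {m : Submodule R M | IsAtom m}).map f ≤ sSup {m : Submodule R N | IsAtom m} := by
  rw [map_le_iff_le_comap]
  refine sSup_le fun S hS ↦ map_le_iff_le_comap.mp ?_
  have := isSimpleModule_iff_isAtom.mpr hS
  rw [← S.range_subtype, ← LinearMap.range_comp]
  obtain inj | eq := (f ∘ₗ S.subtype).injective_or_eq_zero
  · exact le_sSup <| isSimpleModule_iff_isAtom.mp <|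
      IsSimpleModule.congr (LinearEquiv.ofInjective _ inj).symm
  · simp [eq]

theorem Submodule.exists_isAtom_le_of_le_sSup_atoms {P : Submodule R M}
    (hP : P ≤ sSup {m : Submodule R M | IsAtom m}) (hP0 : P ≠ ⊥) : ∃ L, IsAtom L ∧ L ≤ P := by
  have : IsSemisimpleModule R ↥(sSup {m : Submodule R M | IsAtom m}) := by
    rw [sSup_eq_iSup]
    refine isSemisimpleModule_biSup_of_isSemisimpleModule_submodule fun m hm ↦ ?_
    have := isSimpleModule_iff_isAtom.mpr hm
    infer_instance
  have := IsSemisimpleModule.of_injective _ (Submodule.inclusion_injective hP)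
  obtain ⟨L, hLP, hL⟩ := (IsSemisimpleModule.eq_bot_or_exists_simple_le P).resolve_left hP0
  exact ⟨L, isSimpleModule_iff_isAtom.mp hL, hLP⟩

end Atoms

section SemiprimeRing

variable {A : Type*} [Ring A]

lemma mul_mem_of_mem_op {R : Submodule Aᵐᵒᵖ A} {x : A} (hx : x ∈ R) (a : A) : x * a ∈ R := by
  simpa using R.smul_mem (op a) hx

lemma mem_span_singleton_op {x y : A} :
    x ∈ span Aᵐᵒᵖ ({y} : Set A) ↔ ∃ d, y * d = x := by
  simp [Submodule.mem_span_singleton, MulOpposite.op_surjective.exists]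

lemma mul_mem_socle {a : A} (ha : a ∈ socle A) (b : A) : a * b ∈ socle A :=
  Submodule.map_sSup_atoms_le (LinearMap.toSpanSingleton A A b) ⟨a, ha, rfl⟩

lemma lAnn_socle_eq_bot (hA : IsSemiprimeRing A) (hE : HasEssentialSocle A) :
    lAnn (socle A : Set A) = ⊥ := by
  have : Ideal.IsTwoSided (lAnn (socle A : Set A)) :=
    ⟨fun b ha s hs ↦ by rw [mul_assoc]; exact ha _ ((socle A).smul_mem b hs)⟩
  by_contra hne
  obtain ⟨y, hy, hy0⟩ := Submodule.exists_mem_ne_zero_of_ne_bot hne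
  obtain ⟨s, hs, hsoc, hs0⟩ := hE (Ideal.toTwoSided (lAnn (socle A : Set A))) fun h ↦ hy0 <| by
    simpa [h] using Ideal.mem_toTwoSided.mpr hy
  refine hs0 (hA s fun x ↦ ?_)
  rw [mul_assoc]
  exact Ideal.mem_toTwoSided.mp hs (x * s) ((socle A).smul_mem x hsoc)

lemma IsAtom.exists_isIdempotentElem_mem (hA : IsSemiprimeRing A) {L : Submodule A A}
    (hL : IsAtom L) : ∃ e ∈ L, e ≠ 0 ∧ IsIdempotentElem e := by
  obtain ⟨b, hbL, hb0⟩ := Submodule.exists_mem_ne_zero_of_ne_bot hL.1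
  obtain ⟨x, hx⟩ : ∃ x, b * x * b ≠ 0 := by
    by_contra! h
    exact hb0 (hA b h)
  set a := x * b
  have hba : b * a ≠ 0 := by rwa [← mul_assoc]
  -- right multiplication by `a` is injective on `L` and maps `L` onto `L`
  let φ := LinearMap.toSpanSingleton A A a
  have hker : L ⊓ LinearMap.ker φ = ⊥ := (hL.le_iff.mp inf_le_left).resolve_right fun h ↦
    hba (h.ge hbL).2
  have hmap : L.map φ = L := by
    refine (hL.le_iff.mp ?_).resolve_left fun h ↦ hba ?_
    · rintro _ ⟨y, -, rfl⟩
      exact L.smul_mem y (L.smul_mem x hbL)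
    · simpa [φ, h] using Submodule.mem_map_of_mem (f := φ) hbL
  obtain ⟨e, heL, hea⟩ : a ∈ L.map φ := by rw [hmap]; exact L.smul_mem x hbL
  replace hea : e * a = a := hea
  refine ⟨e, heL, ?_, ?_⟩
  · rintro rfl
    exact hba (by rw [← hea, zero_mul, mul_zero])
  · have : e * e - e ∈ L ⊓ LinearMap.ker φ := by
      refine ⟨L.sub_mem (L.smul_mem e heL) heL, ?_⟩
      change (e * e - e) * a = 0
      rw [sub_mul, mul_assoc, hea, hea, sub_self]
    rwa [hker, Submodule.mem_bot, sub_eq_zero] at this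

lemma exists_isIdempotentElem_mem_socle_mul (hA : IsSemiprimeRing A) (hE : HasEssentialSocle A)
    {z : A} (hz : z ≠ 0) :
    ∃ q, IsIdempotentElem q ∧ q ≠ 0 ∧ q ∈ socle A ∧ ∃ d, z * d = q := by
  obtain ⟨c, hc, hzc⟩ : ∃ c ∈ socle A, z * c ≠ 0 := by
    by_contra! h
    exact hz (by simpa [lAnn_socle_eq_bot hA hE] using (show z ∈ lAnn (socle A : Set A) from h))
  set u := z * c
  have hu : u ∈ socle A := (socle A).smul_mem z hc
  obtain ⟨L, hL, hLu⟩ := Submodule.exists_isAtom_le_of_le_sSup_atoms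
    ((span_singleton_le_iff_mem u _).mpr hu) (by simpa using hzc)
  obtain ⟨e, heL, he0, he⟩ := hL.exists_isIdempotentElem_mem hA
  obtain ⟨c', hc'⟩ := mem_span_singleton.mp (hLu heL)
  replace hc' : c' * u = e := hc'
  refine ⟨u * (e * c'), ?_, fun h ↦ he0 ?_, mul_mem_socle hu _, c * (e * c'),
    by simp [u, mul_assoc]⟩
  · calc u * (e * c') * (u * (e * c')) = u * (e * (c' * u) * e * c') := by noncomm_ring
      _ = u * (e * c') := by rw [hc', he.eq, he.eq]
  · calc e = c' * u * e * (c' * u) := by rw [hc', he.eq, he.eq]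
      _ = c' * (u * (e * c')) * u := by noncomm_ring
      _ = 0 := by rw [h, mul_zero, zero_mul]

lemma IsIdempotentElem.add_sub_mul_of_mul_eq_zero {p q : A} (hp : IsIdempotentElem p)
    (hq : IsIdempotentElem q) (hpq : p * q = 0) : IsIdempotentElem (p + q - q * p) := by
  have hpq' (x : A) : p * (q * x) = 0 := by rw [← mul_assoc, hpq, zero_mul]
  simp only [IsIdempotentElem, mul_sub, sub_mul, mul_add, add_mul, mul_assoc, hp.eq, hq.eq, hpq,
    hpq', hq.mul_self_mul]
  abel

lemma span_singleton_lt_span_singleton_op {p e : A} (hp : IsIdempotentElem p) (hep : e * p = p)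
    (hpe : p * e = p) (hne : e ≠ p) : span Aᵐᵒᵖ ({p} : Set A) < span Aᵐᵒᵖ ({e} : Set A) := by
  refine lt_of_le_of_ne ((span_singleton_le_iff_mem _ _).mpr (mem_span_singleton_op.mpr ⟨p, hep⟩))
    fun h ↦ hne ?_
  obtain ⟨w, hw⟩ := mem_span_singleton_op.mp (h ▸ mem_span_singleton_self e)
  rw [← hpe, ← hw, ← mul_assoc, hp.eq]

lemma exists_span_singleton_lt_of_ne (hA : IsSemiprimeRing A) (hE : HasEssentialSocle A)
    {R : Submodule Aᵐᵒᵖ A} {p : A} (hp : IsIdempotentElem p) (hpsoc : p ∈ socle A) (hpR : p ∈ R)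
    (hne : span Aᵐᵒᵖ ({p} : Set A) ≠ R) :
    ∃ e, IsIdempotentElem e ∧ e ∈ socle A ∧ e ∈ R ∧
      span Aᵐᵒᵖ ({p} : Set A) < span Aᵐᵒᵖ ({e} : Set A) := by
  obtain ⟨x, hxR, hxp⟩ := SetLike.exists_of_lt
    (lt_of_le_of_ne ((span_singleton_le_iff_mem _ _).mpr hpR) hne)
  set z := x - p * x
  have hz : z ≠ 0 := fun h ↦ hxp (mem_span_singleton_op.mpr ⟨x, (sub_eq_zero.mp h).symm⟩)
  have hpz : p * z = 0 := by rw [mul_sub, ← mul_assoc, hp.eq, sub_self]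
  obtain ⟨q, hq, hq0, hqsoc, d, hzd⟩ := exists_isIdempotentElem_mem_socle_mul hA hE hz
  have hpq : p * q = 0 := by rw [← hzd, ← mul_assoc, hpz, zero_mul]
  have hqR : q ∈ R := hzd ▸ mul_mem_of_mem_op (R.sub_mem hxR (mul_mem_of_mem_op hpR x)) d
  refine ⟨p + q - q * p, hp.add_sub_mul_of_mul_eq_zero hq hpq,
    (socle A).sub_mem ((socle A).add_mem hpsoc hqsoc) (mul_mem_socle hqsoc p),
    R.sub_mem (R.add_mem hpR hqR) (mul_mem_of_mem_op hqR p),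
    span_singleton_lt_span_singleton_op hp ?_ ?_ fun h ↦ hq0 ?_⟩
  · simp only [sub_mul, add_mul, hp.eq, mul_assoc, add_sub_cancel_right]
  · simp only [mul_sub, mul_add, hp.eq, hpq, ← mul_assoc, zero_mul, add_zero, sub_zero]
  · calc q = (p + q - q * p) * q := by simp only [sub_mul, add_mul, hpq, hq.eq, mul_assoc,
          mul_zero, sub_zero, zero_add]
      _ = 0 := by rw [h, hpq]

end SemiprimeRing

lemma ENat.exists_max_image_of_le_coe {α : Type*} {s : Set α} (hs : s.Nonempty) (f : α → ℕ∞)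
    {M : ℕ} (hM : ∀ a ∈ s, f a ≤ M) : ∃ a ∈ s, ∀ b ∈ s, f b ≤ f a := by
  have := hs.to_subtype
  obtain ⟨⟨a, ha⟩, h⟩ := ENat.exists_eq_iSup_of_lt_top (f := fun b : s ↦ f b)
    ((iSup_le fun b : s ↦ hM b b.2).trans_lt (ENat.natCast_lt_top M))
  exact ⟨a, ha, fun b hb ↦ h ▸ le_iSup (fun b : s ↦ f b) ⟨b, hb⟩⟩

theorem stmt14 (A : Type*) [Ring A] (hA : IsSemiprimeRing A) (hE : HasEssentialSocle A)
    (R : Submodule Aᵐᵒᵖ A) (M : ℕ)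
    (hM : ∀ p : A, IsIdempotentElem p → p ∈ socle A → p ∈ R →
      mlen Aᵐᵒᵖ (Submodule.span Aᵐᵒᵖ ({p} : Set A)) ≤ (M : ℕ∞)) :
    mlen Aᵐᵒᵖ R ≤ (M : ℕ∞) ∧
      ∃ p : A, IsIdempotentElem p ∧ p ∈ socle A ∧ p ∈ R ∧
        R = Submodule.span Aᵐᵒᵖ ({p} : Set A) ∧
        ∀ q : A, IsIdempotentElem q → q ∈ socle A → q ∈ R →
          mlen Aᵐᵒᵖ (Submodule.span Aᵐᵒᵖ ({q} : Set A))
            ≤ mlen Aᵐᵒᵖ (Submodule.span Aᵐᵒᵖ ({p} : Set A)) := by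
  obtain ⟨p, ⟨hp, hpsoc, hpR⟩, hmax⟩ := ENat.exists_max_image_of_le_coe
    (s := {q | IsIdempotentElem q ∧ q ∈ socle A ∧ q ∈ R}) ⟨0, .zero, zero_mem _, zero_mem _⟩
    (fun q ↦ mlen Aᵐᵒᵖ (span Aᵐᵒᵖ ({q} : Set A))) fun q ⟨hq, hqsoc, hqR⟩ ↦ hM q hq hqsoc hqR
  have hR : R = span Aᵐᵒᵖ ({p} : Set A) := by
    by_contra hne
    obtain ⟨e, he, hesoc, heR, hlt⟩ :=
      exists_span_singleton_lt_of_ne hA hE hp hpsoc hpR (Ne.symm hne)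
    have hfin := ((hM e he hesoc heR).trans_lt (ENat.natCast_lt_top M)).ne
    exact (mlen_lt_mlen_of_lt hlt hfin).not_ge (hmax e ⟨he, hesoc, heR⟩)
  exact ⟨hR ▸ hM p hp hpsoc hpR, p, hp, hpsoc, hpR, hR,
    fun q hq hqsoc hqR ↦ hmax q ⟨hq, hqsoc, hqR⟩⟩
end

section
/- Let A be a semiprime unital ring with essential socle and L ⊆ A a left ideal with len(A/L) < ∞. Then the right annihilator Ran(L) satisfies len(Ran(L)) ≤ len(A/L) < ∞. -/
open MulOpposite Submodule

/-!
Right multiplication identifies `Ran(L)` with `Hom_A(A ⧸ L, A)`, so it suffices that the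
`A`-dual of a left module never has larger length than the module. Dualizing
`0 → N → M → M ⧸ N → 0` is left exact, so by induction along a composition series it suffices
that `Hom_A(S, A)` has length at most one for simple `S`. In a semiprime ring a nonzero
`φ : S → A` admits `s₀ ≠ 0` with `φ s₀ • s₀ = s₀`; then every `ψ` equals `u ↦ φ u * ψ s₀`,
since their difference kills `s₀ ≠ 0` and so vanishes by Schur's lemma.
-/

open Module

theorem mlen_eq_length_s15 (R M : Type*) [Ring R] [AddCommGroup M] [Module R M] :
    mlen R M = length R M := by
  rw [mlen, ← coe_length, WithBot.unbotD_coe]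

section Exact

variable {R M N P : Type*} [Ring R] [AddCommGroup M] [Module R M] [AddCommGroup N] [Module R N]
  [AddCommGroup P] [Module R P]

theorem Module.length_le_add_of_exact {f : N →ₗ[R] M} {g : M →ₗ[R] P} (H : Function.Exact f g) :
    length R M ≤ length R N + length R P := by
  rw [length_eq_add_of_exact _ _ (LinearMap.range f).injective_subtype
    (LinearMap.range f).mkQ_surjective (LinearMap.exact_subtype_mkQ _)]
  have hker : LinearMap.range f = LinearMap.ker g := (LinearMap.exact_iff.mp H).symm
  gcongr
  · exact length_le_of_surjective _ f.surjective_rangeRestrict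
  · exact length_le_of_injective _ (LinearMap.ker_eq_bot.mp
      (Submodule.ker_liftQ_eq_bot' _ g hker))

variable (S : Type*) [Semiring S] [Module S P] [SMulCommClass R S P]

theorem LinearMap.exact_lcomp_mkQ_lcomp_subtype (K : Submodule R M) :
    Function.Exact (lcomp S P K.mkQ) (lcomp S P K.subtype) := by
  intro h
  refine ⟨fun hh ↦ ⟨K.liftQ h fun x hx ↦ ?_, ?_⟩, ?_⟩
  · simpa using LinearMap.congr_fun hh ⟨x, hx⟩
  · ext; simp
  · rintro ⟨y, rfl⟩
    ext ⟨x, hx⟩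
    simp [(Submodule.Quotient.mk_eq_zero K).mpr hx]

end Exact

namespace IsSemiprimeRing

variable {A : Type*} [Ring A] (hA : IsSemiprimeRing A)
include hA

section Simple

variable {S : Type*} [AddCommGroup S] [Module A S] [IsSimpleModule A S]

/-- Semiprimeness gives `φ s * x * φ s ≠ 0`, so `u ↦ φ u • t` with `t = x • s` is a nonzero
endomorphism of `S`, hence bijective by Schur; `s₀` is the preimage of `t`. -/
theorem exists_apply_smul_eq_self {φ : S →ₗ[A] A} (hφ : φ ≠ 0) :
    ∃ s₀ : S, s₀ ≠ 0 ∧ φ s₀ • s₀ = s₀ := by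
  obtain ⟨s, hs⟩ : ∃ s, φ s ≠ 0 := by
    by_contra! h
    exact hφ (LinearMap.ext h)
  obtain ⟨x, hx⟩ : ∃ x, φ s * x * φ s ≠ 0 := by
    by_contra! h
    exact hs (hA _ h)
  set f : S →ₗ[A] S := φ.smulRight (x • s)
  have hf : f ≠ 0 := fun h ↦ hx <| by
    simpa [f, mul_assoc] using congrArg φ (LinearMap.congr_fun h s)
  have hbij := LinearMap.bijective_of_ne_zero hf
  obtain ⟨s₀, hs₀⟩ := hbij.surjective (x • s)
  refine ⟨s₀, ?_, hbij.injective ?_⟩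
  · rintro rfl
    rw [map_zero] at hs₀
    exact hf (by ext u; simp [f, ← hs₀])
  · rw [map_smul, hs₀]
    exact hs₀

theorem exists_eq_smul_of_ne_zero {φ : S →ₗ[A] A} (hφ : φ ≠ 0) (ψ : S →ₗ[A] A) :
    ∃ c : Aᵐᵒᵖ, ψ = c • φ := by
  obtain ⟨s₀, hs₀, he⟩ := hA.exists_apply_smul_eq_self hφ
  refine ⟨op (ψ s₀), ?_⟩
  have hψ : φ s₀ * ψ s₀ = ψ s₀ := by rw [← smul_eq_mul, ← map_smul, he]
  have hvanish : (ψ - op (ψ s₀) • φ) s₀ = 0 := by simp [hψ]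
  rcases (ψ - op (ψ s₀) • φ).injective_or_eq_zero with hinj | h
  · exact absurd (hinj (hvanish.trans (map_zero _).symm)) hs₀
  · exact sub_eq_zero.mp h

theorem length_dual_le_one : length Aᵐᵒᵖ (S →ₗ[A] A) ≤ 1 := by
  rcases subsingleton_or_nontrivial (S →ₗ[A] A) with _ | _
  · simp [length_eq_zero]
  have : IsSimpleModule Aᵐᵒᵖ (S →ₗ[A] A) :=
    { eq_bot_or_eq_top T := or_iff_not_imp_left.mpr fun hT ↦ by
        obtain ⟨φ, hφT, hφ⟩ := T.exists_mem_ne_zero_of_ne_bot hT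
        refine eq_top_iff.mpr fun ψ _ ↦ ?_
        obtain ⟨c, rfl⟩ := hA.exists_eq_smul_of_ne_zero hφ ψ
        exact T.smul_mem c hφT }
  simp

end Simple

theorem length_dual_le (M : Type*) [AddCommGroup M] [Module A M] :
    length Aᵐᵒᵖ (M →ₗ[A] A) ≤ length A M := by
  by_cases hM : IsFiniteLength A M
  swap
  · rw [← length_ne_top_iff, not_not] at hM
    simp [hM]
  induction hM with
  | of_subsingleton => simp [length_eq_zero]
  | @of_simple_quotient M _ _ N _ _ ih =>
    calc length Aᵐᵒᵖ (M →ₗ[A] A)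
        ≤ length Aᵐᵒᵖ (M ⧸ N →ₗ[A] A) + length Aᵐᵒᵖ (N →ₗ[A] A) :=
          length_le_add_of_exact (LinearMap.exact_lcomp_mkQ_lcomp_subtype _ N)
      _ ≤ 1 + length A N := add_le_add hA.length_dual_le_one ih
      _ = length A M := by
        rw [length_eq_add_of_exact N.subtype N.mkQ N.injective_subtype N.mkQ_surjective
          (LinearMap.exact_subtype_mkQ N), length_eq_one A (M ⧸ N), add_comm]

end IsSemiprimeRing

section rAnn

variable {A : Type*} [Ring A]

theorem mem_rAnn {S : Set A} {a : A} : a ∈ rAnn S ↔ ∀ s ∈ S, s * a = 0 := Iff.rfl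

variable (L : Submodule A A)

def rAnnToDual : rAnn (L : Set A) →ₗ[Aᵐᵒᵖ] (A ⧸ L →ₗ[A] A) where
  toFun x := L.liftQ (LinearMap.toSpanSingleton A A x) fun a ha ↦ by
    simpa using mem_rAnn.mp x.2 a ha
  map_add' x y := by ext; simp
  map_smul' c x := by ext; simp

theorem rAnnToDual_injective : Function.Injective (rAnnToDual L) := fun x y h ↦ by
  simpa [rAnnToDual] using LinearMap.congr_fun h (Submodule.Quotient.mk 1)

end rAnn

theorem stmt15_general (A : Type*) [Ring A] (hA : IsSemiprimeRing A)
    (L : Submodule A A) :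
    mlen Aᵐᵒᵖ (rAnn (L : Set A)) ≤ mlen A (A ⧸ L) := by
  rw [mlen_eq_length_s15, mlen_eq_length_s15]
  exact (length_le_of_injective _ (rAnnToDual_injective L)).trans (hA.length_dual_le _)

theorem stmt15 (A : Type*) [Ring A] (hA : IsSemiprimeRing A) (hE : HasEssentialSocle A)
    (L : Submodule A A) (hL : mlen A (A ⧸ L) ≠ ⊤) :
    mlen Aᵐᵒᵖ (rAnn (L : Set A)) ≤ mlen A (A ⧸ L) :=
  stmt15_general A hA L
end
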